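/- arXiv:1808.09069 — 4 statements merged into one kernel-verified Lean document; each statement's English description precedes it below -/
import Mathlib

section
/- Let X and Y be independent exponential random variables with rates α > 0 and β > 0 respectively. Then X − Y and min(X, Y) are independent. -/
/-!
The map `(x, y) ↦ (x - y, min x y)` preserves Lebesgue measure on `ℝ²`: it is the shear
`(x, y) ↦ (x - y, y)` followed by the skew translation `(u, v) ↦ (u, v + min u 0)`.
Since `α x + β y = α (x - y)⁺ + β (x - y)⁻ + (α + β) min x y`, the joint density
`α β exp (-(α x + β y))` of `(X, Y)` on the quadrant becomes, in the new coordinates, an asymmetric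
Laplace density in `x - y` times the `Exp(α + β)` density in `min x y`. Hence the joint law of
`(X - Y, min X Y)` is a product measure.
-/

open MeasureTheory ProbabilityTheory Real
open scoped ENNReal

lemma MeasureTheory.Measure.map_withDensity_comp {γ δ : Type*} [MeasurableSpace γ]
    [MeasurableSpace δ] (μ : Measure γ) {f : γ → δ} (hf : Measurable f) {g : δ → ℝ≥0∞}
    (hg : Measurable g) :
    (μ.withDensity (g ∘ f)).map f = (μ.map f).withDensity g := by
  ext s hs
  rw [Measure.map_apply hf hs, withDensity_apply _ (hf hs), withDensity_apply _ hs,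
    setLIntegral_map hs hg hf, Function.comp_def]

lemma ProbabilityTheory.indepFun_of_map_prod_eq_prod {Ω β γ : Type*} [MeasurableSpace Ω]
    [MeasurableSpace β] [MeasurableSpace γ] {μ : Measure Ω} [IsProbabilityMeasure μ]
    {f : Ω → β} {g : Ω → γ} (hf : Measurable f) (hg : Measurable g)
    {ν₁ : Measure β} {ν₂ : Measure γ} [SFinite ν₁] [SFinite ν₂]
    (h : μ.map (fun ω => (f ω, g ω)) = ν₁.prod ν₂) : IndepFun f g μ := by
  have hfg : Measurable fun ω => (f ω, g ω) := hf.prodMk hg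
  have hmass : ν₁ Set.univ * ν₂ Set.univ = 1 := by
    rw [← Measure.prod_prod, Set.univ_prod_univ, ← h, Measure.map_apply hfg .univ,
      Set.preimage_univ, measure_univ]
  have hf_law : μ.map f = ν₂ Set.univ • ν₁ := by
    rw [← Measure.map_fst_prod, ← h, Measure.map_map measurable_fst hfg]; rfl
  have hg_law : μ.map g = ν₁ Set.univ • ν₂ := by
    rw [← Measure.map_snd_prod, ← h, Measure.map_map measurable_snd hfg]; rfl
  rw [indepFun_iff_map_prod_eq_prod_map_map hf.aemeasurable hg.aemeasurable, h, hf_law, hg_law,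
    Measure.prod_smul_left, Measure.prod_smul_right, smul_smul, mul_comm, hmass, one_smul]

lemma measurePreserving_sub_min :
    MeasurePreserving (fun p : ℝ × ℝ => (p.1 - p.2, min p.1 p.2)) := by
  have hshear : MeasurePreserving (fun p : ℝ × ℝ => (p.1 - p.2, p.2)) :=
    measurePreserving_sub_prod volume volume
  have hskew : MeasurePreserving (fun q : ℝ × ℝ => (q.1, q.2 + min q.1 0)) :=
    (MeasurePreserving.id volume).skew_product (by fun_prop)
      (.of_forall fun u => map_add_right_eq_self volume (min u 0))
  have hfactor : (fun p : ℝ × ℝ => (p.1 - p.2, min p.1 p.2)) =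
      (fun q : ℝ × ℝ => (q.1, q.2 + min q.1 0)) ∘ (fun p : ℝ × ℝ => (p.1 - p.2, p.2)) := by
    funext p
    simp [← min_add_add_left]
  exact hfactor ▸ hskew.comp hshear

namespace ProbabilityTheory

lemma exponentialPDFReal_eq (r x : ℝ) :
    exponentialPDFReal r x = if 0 ≤ x then r * exp (-(r * x)) else 0 := by
  simp [exponentialPDFReal, gammaPDFReal]

@[fun_prop]
lemma measurable_exponentialPDF (r : ℝ) : Measurable (exponentialPDF r) :=
  (measurable_exponentialPDFReal r).ennreal_ofReal

noncomputable def asymLaplacePDFReal (α β u : ℝ) : ℝ :=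
  α * β / (α + β) * exp (-(α * u⁺ + β * u⁻))

noncomputable def asymLaplacePDF (α β u : ℝ) : ℝ≥0∞ :=
  ENNReal.ofReal (asymLaplacePDFReal α β u)

@[fun_prop]
lemma measurable_asymLaplacePDF (α β : ℝ) : Measurable (asymLaplacePDF α β) := by
  unfold asymLaplacePDF asymLaplacePDFReal
  fun_prop

lemma mul_posPart_sub_add_mul_negPart_sub (α β x y : ℝ) :
    α * (x - y)⁺ + β * (x - y)⁻ + (α + β) * min x y = α * x + β * y := by
  rcases le_total x y with h | h
  · simp [posPart_eq_zero.2 (sub_nonpos.2 h), negPart_eq_neg.2 (sub_nonpos.2 h), min_eq_left h]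
    ring
  · simp [posPart_eq_self.2 (sub_nonneg.2 h), negPart_eq_zero.2 (sub_nonneg.2 h), min_eq_right h]
    ring

lemma exponentialPDFReal_mul_exponentialPDFReal {α β : ℝ} (hαβ : α + β ≠ 0) (x y : ℝ) :
    exponentialPDFReal α x * exponentialPDFReal β y =
      asymLaplacePDFReal α β (x - y) * exponentialPDFReal (α + β) (min x y) := by
  simp only [exponentialPDFReal_eq, asymLaplacePDFReal, le_min_iff]
  by_cases hxy : 0 ≤ x ∧ 0 ≤ y
  · rw [if_pos hxy.1, if_pos hxy.2, if_pos hxy]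
    calc α * exp (-(α * x)) * (β * exp (-(β * y))) = α * β * exp (-(α * x + β * y)) := by
          rw [neg_add, exp_add]; ring
      _ = _ := by
          rw [← mul_posPart_sub_add_mul_negPart_sub α β x y, neg_add, exp_add]
          field_simp
  · rw [if_neg hxy]
    rcases not_and_or.1 hxy with hx | hy <;> simp [*]

lemma exponentialPDF_mul_exponentialPDF {α β : ℝ} (hα : 0 < α) (hβ : 0 < β) (x y : ℝ) :
    exponentialPDF α x * exponentialPDF β y =
      asymLaplacePDF α β (x - y) * exponentialPDF (α + β) (min x y) := by
  rw [exponentialPDF, exponentialPDF, ← ENNReal.ofReal_mul (exponentialPDFReal_nonneg hα _),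
    exponentialPDFReal_mul_exponentialPDFReal (by positivity),
    ENNReal.ofReal_mul' (exponentialPDFReal_nonneg (by positivity) _)]
  rfl

lemma map_sub_min_prod_expMeasure {α β : ℝ} (hα : 0 < α) (hβ : 0 < β) :
    ((expMeasure α).prod (expMeasure β)).map (fun p => (p.1 - p.2, min p.1 p.2)) =
      (volume.withDensity (asymLaplacePDF α β)).prod (expMeasure (α + β)) := by
  have hdensity : (fun p : ℝ × ℝ => exponentialPDF α p.1 * exponentialPDF β p.2) =
      (fun q => asymLaplacePDF α β q.1 * exponentialPDF (α + β) q.2) ∘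
        (fun p => (p.1 - p.2, min p.1 p.2)) :=
    funext fun p => exponentialPDF_mul_exponentialPDF hα hβ p.1 p.2
  have hexp (r : ℝ) : expMeasure r = volume.withDensity (exponentialPDF r) := rfl
  rw [hexp, hexp, hexp,
    prod_withDensity (measurable_exponentialPDF α) (measurable_exponentialPDF β),
    prod_withDensity (measurable_asymLaplacePDF α β) (measurable_exponentialPDF _), hdensity,
    Measure.map_withDensity_comp _ measurePreserving_sub_min.measurable (by fun_prop),
    ← Measure.volume_eq_prod, measurePreserving_sub_min.map_eq]
end ProbabilityTheory

/-- If `X ~ Exp(α)` and `Y ~ Exp(β)` are independent, then `X - Y` and `min(X, Y)`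
are independent. -/
theorem exp_diff_min_indep {Ω : Type*} [MeasurableSpace Ω] (μ : Measure Ω)
    [IsProbabilityMeasure μ] {X Y : Ω → ℝ} (hX : Measurable X) (hY : Measurable Y)
    {α β : ℝ} (hα : 0 < α) (hβ : 0 < β) (hXY : IndepFun X Y μ)
    (hXd : μ.map X = expMeasure α) (hYd : μ.map Y = expMeasure β) :
    IndepFun (fun ω => X ω - Y ω) (fun ω => min (X ω) (Y ω)) μ := by
  have hjoint : μ.map (fun ω => (X ω, Y ω)) = (expMeasure α).prod (expMeasure β) := by
    rw [hXY.map_prod_eq_prod_map_map hX.aemeasurable hY.aemeasurable, hXd, hYd]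
  have hlaw : μ.map (fun ω => (X ω - Y ω, min (X ω) (Y ω))) =
      (volume.withDensity (asymLaplacePDF α β)).prod (expMeasure (α + β)) := by
    rw [← map_sub_min_prod_expMeasure hα hβ, ← hjoint,
      Measure.map_map measurePreserving_sub_min.measurable (hX.prodMk hY)]
    rfl
  have := isProbabilityMeasure_expMeasure (add_pos hα hβ)
  exact indepFun_of_map_prod_eq_prod (hX.sub hY) (hX.min hY) hlaw
end

section
/- The single-step queueing update is invertible in the following dual sense: if Ĩ_k = ω_k + (I_k − J_{k−1})^+, J_k = ω_k + (J_{k−1} − I_k)^+, and ω̃_k = I_k ∧ J_{k−1}, then I_k = ω̃_k + (Ĩ_k − J_k)^+, J_{k−1} = ω̃_k + (J_k − Ĩ_k)^+, and ω_k = Ĩ_k ∧ J_k. -/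
/-- The single-step queueing update is invertible in the dual sense. -/
theorem queue_update_dual (Jprev I ω Itil J ωtil : ℝ)
    (hJprev : 0 ≤ Jprev) (hI : 0 ≤ I) (hω : 0 ≤ ω)
    (hItil : Itil = ω + max (I - Jprev) 0)
    (hJ : J = ω + max (Jprev - I) 0)
    (hωtil : ωtil = min I Jprev) :
    I = ωtil + max (Itil - J) 0 ∧
    Jprev = ωtil + max (J - Itil) 0 ∧
    ω = min Itil J := by
  rcases le_total I Jprev with h | h
  · rw [max_eq_right (by linarith)] at hItil
    rw [max_eq_left (by linarith)] at hJ
    refine ⟨?_, ?_, ?_⟩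
    · rw [hωtil, min_eq_left h, max_eq_right (by linarith)]; linarith
    · rw [hωtil, min_eq_left h, max_eq_left (by linarith)]; linarith
    · rw [min_eq_left (by linarith)]; linarith
  · rw [max_eq_left (by linarith)] at hItil
    rw [max_eq_right (by linarith)] at hJ
    refine ⟨?_, ?_, ?_⟩
    · rw [hωtil, min_eq_right h, max_eq_left (by linarith)]; linarith
    · rw [hωtil, min_eq_right h, max_eq_right (by linarith)]; linarith
    · rw [min_eq_right (by linarith)]; linarith
end

section
/- For the two-level last-passage values H defined from given weights J_m, (I_i)_{m<i≤n}, (ω_i)_{m<i≤n} by H_{(m,0),(n,0)} = Σ_{i=m+1}^n I_i, H_{(m,0),(m,1)} = J_m, and H_{(m,0),(n,1)} = max( J_m + Σ_{i=m+1}^n ω_i, max_{m+1≤j≤n} [ Σ_{i=m+1}^j I_i + Σ_{i=j}^n ω_i ] ), and with (Ĩ_k, J_k, ω̃_k) computed by the queueing recursion Ĩ_k = ω_k + (I_k − J_{k−1})^+, J_k = ω_k + (J_{k−1} − I_k)^+, one has for every k in [m, n]: H_{(m,0),(n,1)} = I_{m+1} + ⋯ + I_k + J_k + Ĩ_{k+1}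 + ⋯ + Ĩ_n. -/
/-!
Both sides are computed by induction on the column. Adding column `n + 1` to the last-passage
value at level 1 gives `max (S_{n+1}, S_n + J_n) + ω_{n+1} = S_{n+1} + J_{n+1}`, where `S_n` is the
level-0 partial sum of the `I`, so the left side equals `S_n + J_n`. On the right, the identity
`I_k + J_k = J_{k-1} + Ĩ_k = ω_k + max (I_k, J_{k-1})` (conservation of mass in the queue) makes
the split value independent of `k`, and at `k = n` it is again `S_n + J_n`.
-/

open Finset

section QueueStep

variable {α : Type*} [AddCommGroup α] [LinearOrder α] [IsOrderedAddMonoid α]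

theorem add_max_sub_zero (a b : α) : a + max (b - a) 0 = max a b := by
  rw [← max_add_add_left, add_sub_cancel, add_zero, max_comm]

theorem add_add_max_sub_zero_comm (a b c : α) :
    a + (c + max (b - a) 0) = b + (c + max (a - b) 0) := by
  rw [add_left_comm, add_max_sub_zero, add_left_comm b, add_max_sub_zero, max_comm]

end QueueStep

section IntervalSums

variable {M : Type*} [AddCommMonoid M]

theorem sum_Icc_add_one_right {a b : ℤ} (h : a ≤ b + 1) (f : ℤ → M) :
    ∑ i ∈ Icc a (b + 1), f i = ∑ i ∈ Icc a b, f i + f (b + 1) := by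
  rw [← insert_Icc_right_eq_Icc_add_one h, sum_insert (by simp), add_comm]

theorem sum_Icc_eq_add_sum_Icc_add_one {a b : ℤ} (h : a ≤ b) (f : ℤ → M) :
    ∑ i ∈ Icc a b, f i = f a + ∑ i ∈ Icc (a + 1) b, f i := by
  rw [← insert_Icc_add_one_left_eq_Icc h, sum_insert (by simp)]

end IntervalSums

theorem sup'_Icc_add_one_right {β : Type*} [LinearOrder β] {a b : ℤ} (h : a ≤ b)
    (f : ℤ → β) :
    (Icc a (b + 1)).sup' (nonempty_Icc.mpr (by omega)) f
      = max (f (b + 1)) ((Icc a b).sup' (nonempty_Icc.mpr h) f) := by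
  simp_rw [← insert_Icc_right_eq_Icc_add_one (show a ≤ b + 1 by omega)]
  exact sup'_insert ..

variable (I ω J Itil : ℤ → ℝ) (m : ℤ)

/-- Weight of the up-right path from `(m, 0)` to `(n, 1)` that climbs to level 1 at column `j`;
climbing at `j = m` collects the boundary weight `J m` instead of any `I`. -/
noncomputable def twoLevelPathWeight (n j : ℤ) : ℝ :=
  if j = m then J m + ∑ i ∈ Icc (m + 1) n, ω i
  else (∑ i ∈ Icc (m + 1) j, I i) + ∑ i ∈ Icc j n, ω i

noncomputable def queueSplit (n k : ℤ) : ℝ :=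
  (∑ i ∈ Icc (m + 1) k, I i) + J k + ∑ i ∈ Icc (k + 1) n, Itil i

variable {I ω J Itil m}

theorem twoLevelPathWeight_add_one {n j : ℤ} (hjn : j ≤ n) :
    twoLevelPathWeight I ω J m (n + 1) j = twoLevelPathWeight I ω J m n j + ω (n + 1) := by
  unfold twoLevelPathWeight
  split_ifs <;> rw [sum_Icc_add_one_right (by omega), add_assoc]

theorem twoLevelPathWeight_self {n : ℤ} (hmn : m < n) :
    twoLevelPathWeight I ω J m n n = (∑ i ∈ Icc (m + 1) n, I i) + ω n := by
  simp [twoLevelPathWeight, hmn.ne']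

theorem sup'_twoLevelPathWeight {n : ℤ} (hmn : m ≤ n)
    (hJ : ∀ k, m < k → k ≤ n → J k = ω k + max (J (k - 1) - I k) 0) :
    (Icc m n).sup' (nonempty_Icc.mpr hmn) (twoLevelPathWeight I ω J m n)
      = (∑ i ∈ Icc (m + 1) n, I i) + J n := by
  induction n, hmn using Int.leInduction with
  | base => simp [twoLevelPathWeight]
  | succ n hmn ih =>
    have hstep : J (n + 1) = ω (n + 1) + max (J n - I (n + 1)) 0 := by
      simpa using hJ (n + 1) (by omega) le_rfl
    set S := ∑ i ∈ Icc (m + 1) n, I i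
    calc (Icc m (n + 1)).sup' _ (twoLevelPathWeight I ω J m (n + 1))
        = max (S + I (n + 1) + ω (n + 1))
            ((Icc m n).sup' (nonempty_Icc.mpr hmn)
              fun j ↦ twoLevelPathWeight I ω J m n j + ω (n + 1)) := by
          rw [sup'_Icc_add_one_right hmn, twoLevelPathWeight_self (by omega),
            sum_Icc_add_one_right (by omega)]
          congr 1
          exact sup'_congr _ rfl fun j hj ↦ by
            rw [mem_Icc] at hj
            exact twoLevelPathWeight_add_one hj.2
      _ = max (S + I (n + 1)) (S + J n) + ω (n + 1) := by
          rw [← sup'_add, ih fun k hmk hkn ↦ hJ k hmk (by omega), max_add_add_right]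
      _ = (∑ i ∈ Icc (m + 1) (n + 1), I i) + J (n + 1) := by
          rw [sum_Icc_add_one_right (by omega), hstep, max_add_add_left,
            ← add_max_sub_zero (I (n + 1))]
          abel

theorem queueSplit_add_one {n k : ℤ} (hmk : m ≤ k) (hkn : k < n)
    (hItil : Itil (k + 1) = ω (k + 1) + max (I (k + 1) - J k) 0)
    (hJ : J (k + 1) = ω (k + 1) + max (J k - I (k + 1)) 0) :
    queueSplit I J Itil m n (k + 1) = queueSplit I J Itil m n k := by
  unfold queueSplit
  rw [sum_Icc_add_one_right (by omega), sum_Icc_eq_add_sum_Icc_add_one (a := k + 1) hkn,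
    hItil, hJ, add_assoc _ (I _), add_add_max_sub_zero_comm]
  abel

theorem queueSplit_eq_queueSplit_self {n : ℤ}
    (hItil : ∀ k, m < k → k ≤ n → Itil k = ω k + max (I k - J (k - 1)) 0)
    (hJ : ∀ k, m < k → k ≤ n → J k = ω k + max (J (k - 1) - I k) 0)
    {k : ℤ} (hmk : m ≤ k) (hkn : k ≤ n) :
    queueSplit I J Itil m n k = queueSplit I J Itil m n n := by
  induction k, hkn using Int.leInductionDown with
  | base => rfl
  | pred k hkn ih =>
    have hstep := queueSplit_add_one (n := n) hmk (by omega)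
      (by simpa using hItil k (by omega) hkn) (by simpa using hJ k (by omega) hkn)
    rw [sub_add_cancel] at hstep
    rw [← hstep, ih (by omega)]

theorem two_level_LPP_alternative_general (m n : ℤ) (hmn : m ≤ n) (I ω Itil J : ℤ → ℝ)
    (hItil : ∀ k, m < k → k ≤ n → Itil k = ω k + max (I k - J (k - 1)) 0)
    (hJ : ∀ k, m < k → k ≤ n → J k = ω k + max (J (k - 1) - I k) 0) :
    ∀ k, m ≤ k → k ≤ n →
      Finset.sup' (Finset.Icc m n) (Finset.nonempty_Icc.mpr hmn)
        (fun j => if j = m then J m + ∑ i ∈ Finset.Icc (m + 1) n, ω i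
          else (∑ i ∈ Finset.Icc (m + 1) j, I i) + ∑ i ∈ Finset.Icc j n, ω i)
      = (∑ i ∈ Finset.Icc (m + 1) k, I i) + J k + ∑ i ∈ Finset.Icc (k + 1) n, Itil i := by
  intro k hmk hkn
  calc (Icc m n).sup' _ (twoLevelPathWeight I ω J m n)
      = (∑ i ∈ Icc (m + 1) n, I i) + J n := sup'_twoLevelPathWeight hmn hJ
    _ = queueSplit I J Itil m n n := by simp [queueSplit]
    _ = queueSplit I J Itil m n k := (queueSplit_eq_queueSplit_self hItil hJ hmk hkn).symm

/-- Two-level last-passage values: with `H_{(m,0),(n,1)}` given by the explicit max formula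
and `(Ĩ_k, J_k)` computed by the queueing recursion, one has, for each `k ∈ [m,n]`,
`H_{(m,0),(n,1)} = I_{m+1} + ⋯ + I_k + J_k + Ĩ_{k+1} + ⋯ + Ĩ_n`. -/
theorem two_level_LPP_alternative (m n : ℤ) (hmn : m ≤ n) (I ω Itil J : ℤ → ℝ)
    (hInn : ∀ i, 0 ≤ I i) (hωnn : ∀ i, 0 ≤ ω i) (hJm : 0 ≤ J m)
    (hItil : ∀ k, m < k → k ≤ n → Itil k = ω k + max (I k - J (k - 1)) 0)
    (hJ : ∀ k, m < k → k ≤ n → J k = ω k + max (J (k - 1) - I k) 0) :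
    ∀ k, m ≤ k → k ≤ n →
      Finset.sup' (Finset.Icc m n) (Finset.nonempty_Icc.mpr hmn)
        (fun j => if j = m then J m + ∑ i ∈ Finset.Icc (m + 1) n, ω i
          else (∑ i ∈ Finset.Icc (m + 1) j, I i) + ∑ i ∈ Finset.Icc j n, ω i)
      = (∑ i ∈ Finset.Icc (m + 1) k, I i) + J k + ∑ i ∈ Finset.Icc (k + 1) n, Itil i :=
  two_level_LPP_alternative_general m n hmn I ω Itil J hItil hJ
end

section
/- Lindley's recursion explicit solution: suppose real numbers W_k (k ∈ ℤ, k ≤ K) satisfy W_k = (W_{k−1} + U_{k−1})^+ for all k, where U_i = ω_i − I_{i+1}, the partial sums satisfy Σ_{i=m}^0 U_i → −∞ as m → −∞, and W_ℓ = 0 for infinitely many ℓ < K. Then W_k = ( sup_{m ≤ k−1} Σ_{i=m}^{k−1} U_i )^+ for all k ≤ K. -/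
/-!
Unrolling `W k = max (W (k - 1) + U (k - 1)) 0` shows that `W k` dominates every
`W m + ∑_{m ≤ i < k} U i`, hence (as `W m ≥ 0`) every backward partial sum `∑_{m ≤ i < k} U i`.
Conversely, once `W` has a zero at or before `k`, `W k` is itself such a partial sum: the one
starting at the last zero (the empty sum if `W k = 0`). So `W k` is the greatest element of `0`
together with the partial sums ending at `k - 1`.
-/

open Finset

lemma Int.sum_Ico_add_one_right {M : Type*} [AddCommMonoid M] {m k : ℤ} (hmk : m ≤ k)
    (f : ℤ → M) : ∑ i ∈ Ico m (k + 1), f i = ∑ i ∈ Ico m k, f i + f k := by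
  rw [← insert_Ico_right_eq_Ico_add_one hmk, sum_insert right_notMem_Ico, add_comm]

lemma IsGreatest.eq_max_csSup_of_insert {α : Type*} [ConditionallyCompleteLinearOrder α]
    {S : Set α} {a b : α} (hS : S.Nonempty) (h : IsGreatest (insert b S) a) :
    a = max (sSup S) b := by
  have hbdd : BddAbove S := ⟨a, fun x hx => h.2 (Set.mem_insert_of_mem b hx)⟩
  rw [← h.csSup_eq, csSup_insert hbdd hS, max_comm]

section Lindley

variable {U W : ℤ → ℝ} {K : ℤ} (hrec : ∀ k ≤ K, W k = max (W (k - 1) + U (k - 1)) 0)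
include hrec

lemma lindley_nonneg {k : ℤ} (hk : k ≤ K) : 0 ≤ W k := by
  rw [hrec k hk]
  exact le_max_right _ _

lemma lindley_add_sum_le {m k : ℤ} (hmk : m ≤ k) (hk : k ≤ K) :
    W m + ∑ i ∈ Ico m k, U i ≤ W k := by
  induction k, hmk using Int.leInduction with
  | base => simp
  | succ k hmk ih =>
    have hstep : W k + U k ≤ W (k + 1) := by
      rw [hrec (k + 1) hk, add_sub_cancel_right]
      exact le_max_left _ _
    rw [Int.sum_Ico_add_one_right hmk]
    linarith [ih (by omega)]

lemma lindley_exists_eq_sum_of_eq_zero {ℓ k : ℤ} (hℓ : W ℓ = 0) (hℓk : ℓ ≤ k) (hk : k ≤ K) :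
    ∃ m ≤ k, W k = ∑ i ∈ Ico m k, U i := by
  induction k, hℓk using Int.leInduction with
  | base => exact ⟨ℓ, le_rfl, by simp [hℓ]⟩
  | succ k hℓk ih =>
    obtain ⟨m, hmk, hWk⟩ := ih (by omega)
    rw [hrec (k + 1) hk, add_sub_cancel_right]
    rcases le_total 0 (W k + U k) with hpos | hneg
    · exact ⟨m, by omega, by rw [max_eq_left hpos, Int.sum_Ico_add_one_right hmk, hWk]⟩
    · exact ⟨k + 1, le_rfl, by simp [max_eq_right hneg]⟩

lemma lindley_isGreatest {ℓ k : ℤ} (hℓ : W ℓ = 0) (hℓk : ℓ ≤ k) (hk : k ≤ K) :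
    IsGreatest (insert 0 {x | ∃ m, m ≤ k - 1 ∧ x = ∑ i ∈ Icc m (k - 1), U i}) (W k) := by
  simp only [Icc_sub_one_right_eq_Ico, Int.le_sub_one_iff]
  refine ⟨?_, ?_⟩
  · obtain ⟨m, hmk, hW⟩ := lindley_exists_eq_sum_of_eq_zero hrec hℓ hℓk hk
    rcases hmk.lt_or_eq with hlt | rfl
    · exact Set.mem_insert_of_mem _ ⟨m, hlt, hW⟩
    · simp [hW]
  · rintro x (rfl | ⟨m, hmk, rfl⟩)
    · exact lindley_nonneg hrec hk
    · linarith [lindley_add_sum_le hrec hmk.le hk, lindley_nonneg hrec (hmk.le.trans hk)]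

end Lindley

theorem lindley_explicit_solution_general (K : ℤ) (W ω I : ℤ → ℝ)
    (hrec : ∀ k : ℤ, k ≤ K → W k = max (W (k - 1) + (ω (k - 1) - I k)) 0)
    (hzeros : ∀ M : ℤ, ∃ ℓ : ℤ, ℓ < K ∧ ℓ ≤ M ∧ W ℓ = 0) :
    ∀ k : ℤ, k ≤ K →
      W k = max (sSup {x : ℝ | ∃ m : ℤ, m ≤ k - 1 ∧
        x = ∑ i ∈ Finset.Icc m (k - 1), (ω i - I (i + 1))}) 0 := by
  intro k hk
  have hrec' : ∀ k ≤ K, W k = max (W (k - 1) + (ω (k - 1) - I (k - 1 + 1))) 0 := by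
    simpa only [sub_add_cancel] using hrec
  obtain ⟨ℓ, -, hℓk, hℓ⟩ := hzeros k
  exact (lindley_isGreatest hrec' hℓ hℓk hk).eq_max_csSup_of_insert
    ⟨_, k - 1, le_rfl, rfl⟩

/-- Explicit solution of Lindley's recursion: if `W_k = (W_{k-1} + U_{k-1})⁺` for `k ≤ K`
with `U_i = ω_i - I_{i+1}`, the partial sums of `U` tend to `-∞`, and `W_ℓ = 0` for
infinitely many `ℓ < K`, then `W_k = (sup_{m ≤ k-1} Σ_{i=m}^{k-1} U_i)⁺` for all `k ≤ K`. -/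
theorem lindley_explicit_solution (K : ℤ) (W ω I : ℤ → ℝ)
    (hω : ∀ i, 0 ≤ ω i) (hI : ∀ i, 0 ≤ I i)
    (hrec : ∀ k : ℤ, k ≤ K → W k = max (W (k - 1) + (ω (k - 1) - I k)) 0)
    (hdiv : Filter.Tendsto (fun m : ℤ => ∑ i ∈ Finset.Icc m 0, (ω i - I (i + 1)))
      Filter.atBot Filter.atBot)
    (hzeros : ∀ M : ℤ, ∃ ℓ : ℤ, ℓ < K ∧ ℓ ≤ M ∧ W ℓ = 0) :
    ∀ k : ℤ, k ≤ K →
      W k = max (sSup {x : ℝ | ∃ m : ℤ, m ≤ k - 1 ∧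
        x = ∑ i ∈ Finset.Icc m (k - 1), (ω i - I (i + 1))}) 0 :=
  lindley_explicit_solution_general K W ω I hrec hzeros
end
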